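/- arXiv:1812.10942 — 3 statements merged into one kernel-verified Lean document; each statement's English description precedes it below -/
import Mathlib

section
/- Let B ≥ 2 and h ≥ 1 be integers and set D = B^h. Every interval [a,b] ⊆ {0,1,…,D−1} of length r = b − a + 1 can be partitioned into at most 2(B−1)(1 + ⌊log_B r⌋) pairwise disjoint B-adic intervals. -/
def BadicP (B : ℕ) (P : Finset (ℕ × ℕ)) : Prop :=
  ∀ p ∈ P, ∃ j k : ℕ, p.1 = k * B ^ j ∧ p.2 = (k + 1) * B ^ j - 1

def IsDecomp (B : ℕ) (P : Finset (ℕ × ℕ)) (S : Finset ℕ) : Prop :=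
  BadicP B P ∧
  ((P : Set (ℕ × ℕ)).Pairwise fun p q => Disjoint (Finset.Icc p.1 p.2) (Finset.Icc q.1 q.2)) ∧
  P.biUnion (fun p => Finset.Icc p.1 p.2) = S

lemma emptyDecomp (B a : ℕ) : IsDecomp B ∅ (Finset.Ico a a) := by
  refine ⟨by simp [BadicP], by simp, by simp⟩

lemma glueDecomp {B : ℕ} {P Q : Finset (ℕ × ℕ)} {a c b : ℕ}
    (hP : IsDecomp B P (Finset.Ico a c)) (hQ : IsDecomp B Q (Finset.Ico c b))
    (hac : a ≤ c) (hcb : c ≤ b) : IsDecomp B (P ∪ Q) (Finset.Ico a b) := by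
  obtain ⟨hP1, hP2, hP3⟩ := hP
  obtain ⟨hQ1, hQ2, hQ3⟩ := hQ
  have hPsub : ∀ p ∈ P, Finset.Icc p.1 p.2 ⊆ Finset.Ico a c := fun p hp => by
    rw [← hP3]; exact Finset.subset_biUnion_of_mem (fun p => Finset.Icc p.1 p.2) hp
  have hQsub : ∀ p ∈ Q, Finset.Icc p.1 p.2 ⊆ Finset.Ico c b := fun p hp => by
    rw [← hQ3]; exact Finset.subset_biUnion_of_mem (fun p => Finset.Icc p.1 p.2) hp
  have hdisj : Disjoint (Finset.Ico a c) (Finset.Ico c b) := by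
    rw [Finset.disjoint_left]; intro x hx hx'
    simp only [Finset.mem_Ico] at hx hx'; omega
  refine ⟨?_, ?_, ?_⟩
  · intro p hp; rcases Finset.mem_union.1 hp with h | h
    exacts [hP1 p h, hQ1 p h]
  · intro p hp q hq hpq
    simp only [Finset.coe_union, Set.mem_union, Finset.mem_coe] at hp hq
    rcases hp with hp | hp <;> rcases hq with hq | hq
    · exact hP2 hp hq hpq
    · exact hdisj.mono (hPsub _ hp) (hQsub _ hq)
    · exact (hdisj.mono (hPsub _ hq) (hQsub _ hp)).symm
    · exact hQ2 hp hq hpq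
  · ext x
    simp only [Finset.mem_biUnion, Finset.mem_union]
    constructor
    · rintro ⟨p, hp | hp, hx⟩
      · have := hPsub p hp hx
        simp only [Finset.mem_Ico] at this ⊢; omega
      · have := hQsub p hp hx
        simp only [Finset.mem_Ico] at this ⊢; omega
    · intro hx
      by_cases hxc : x < c
      · have hx1 : x ∈ Finset.Ico a c := by
          simp only [Finset.mem_Ico] at hx ⊢; omega
        rw [← hP3] at hx1
        obtain ⟨p, hp, hxp⟩ := Finset.mem_biUnion.1 hx1
        exact ⟨p, Or.inl hp, hxp⟩
      · have hx1 : x ∈ Finset.Ico c b := by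
          simp only [Finset.mem_Ico] at hx ⊢; omega
        rw [← hQ3] at hx1
        obtain ⟨p, hp, hxp⟩ := Finset.mem_biUnion.1 hx1
        exact ⟨p, Or.inr hp, hxp⟩

lemma singleDecomp (B : ℕ) (hB : 2 ≤ B) (j k : ℕ) :
    IsDecomp B {(k * B ^ j, (k + 1) * B ^ j - 1)}
      (Finset.Ico (k * B ^ j) ((k + 1) * B ^ j)) := by
  have hm : 0 < B ^ j := pow_pos (by omega) j
  have hadd : k * B ^ j + B ^ j = (k + 1) * B ^ j := by ring
  refine ⟨?_, by simp, ?_⟩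
  · intro p hp; simp only [Finset.mem_singleton] at hp
    exact ⟨j, k, by simp [hp]⟩
  · rw [Finset.singleton_biUnion]
    ext x
    simp only [Finset.mem_Icc, Finset.mem_Ico]
    omega

lemma blocksDecomp (B : ℕ) (hB : 2 ≤ B) (j k : ℕ) : ∀ t : ℕ,
    ∃ P : Finset (ℕ × ℕ),
      IsDecomp B P (Finset.Ico (k * B ^ j) ((k + t) * B ^ j)) ∧ P.card ≤ t := by
  intro t
  induction t with
  | zero => exact ⟨∅, by simpa using emptyDecomp B (k * B ^ j), by simp⟩
  | succ t ih =>
    obtain ⟨P, hP, hc⟩ := ih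
    have hs := singleDecomp B hB j (k + t)
    have h1 : k * B ^ j ≤ (k + t) * B ^ j := Nat.mul_le_mul_right _ (by omega)
    have h2 : (k + t) * B ^ j ≤ (k + t + 1) * B ^ j := Nat.mul_le_mul_right _ (by omega)
    have hg := glueDecomp hP hs h1 h2
    refine ⟨P ∪ {((k + t) * B ^ j, (k + t + 1) * B ^ j - 1)}, ?_, ?_⟩
    · have : k + (t + 1) = k + t + 1 := by ring
      rw [this]; exact hg
    · calc (P ∪ _).card ≤ P.card + 1 := by
            simpa using Finset.card_union_le P {((k + t) * B ^ j, (k + t + 1) * B ^ j - 1)}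
        _ ≤ t + 1 := by omega

lemma prefixDecomp (B : ℕ) (hB : 2 ≤ B) :
    ∀ r : ℕ, ∀ s a : ℕ, 0 < r → r ≤ B ^ s → B ^ s ∣ a →
    ∃ P : Finset (ℕ × ℕ), IsDecomp B P (Finset.Ico a (a + r)) ∧
      P.card ≤ (B - 1) * (1 + Nat.log B r) := by
  intro r
  induction r using Nat.strong_induction_on with
  | _ r ih =>
    intro s a hr hrs hdvd
    set s' := Nat.log B r with hs'
    set m := B ^ s' with hm
    have hm0 : 0 < m := pow_pos (by omega) _
    have hmr : m ≤ r := Nat.pow_log_le_self B (by omega)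
    have hrB : r < B * m := by
      have := Nat.lt_pow_succ_log_self (by omega : 1 < B) r
      calc r < B ^ (Nat.log B r + 1) := this
        _ = B * m := by rw [hm, hs', pow_succ, mul_comm]
    have hss : s' ≤ s :=
      (Nat.pow_le_pow_iff_right (by omega : 1 < B)).1 (le_trans hmr hrs)
    have hmdvd : m ∣ a := dvd_trans (pow_dvd_pow B hss) hdvd
    obtain ⟨k, hk⟩ := hmdvd
    set t := r / m with ht
    have htm : t * m ≤ r := Nat.div_mul_le_self r m
    have htm2 : r < t * m + m := by
      have h1 := Nat.mod_add_div r m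
      have h2 := Nat.mod_lt r hm0
      have h3 : m * (r / m) = t * m := by rw [ht, mul_comm]
      omega
    have ht1 : 1 ≤ t := (Nat.one_le_div_iff hm0).2 hmr
    have htB : t ≤ B - 1 := by
      have htb : t < B := by
        by_contra hcon
        push_neg at hcon
        have : B * m ≤ t * m := Nat.mul_le_mul_right _ hcon
        omega
      omega
    obtain ⟨Pm, hPm, hPmc⟩ := blocksDecomp B hB s' k t
    have hkm : k * m = a := by rw [hk, mul_comm]
    have hktm : (k + t) * m = a + t * m := by rw [add_mul, hkm]
    rw [hkm, hktm] at hPm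
    set r' := r - t * m with hr'
    rcases Nat.eq_zero_or_pos r' with hr0 | hr0
    · refine ⟨Pm, ?_, ?_⟩
      · have : a + t * m = a + r := by omega
        rwa [this] at hPm
      · calc Pm.card ≤ t := hPmc
          _ ≤ (B - 1) * 1 := by omega
          _ ≤ (B - 1) * (1 + Nat.log B r) := Nat.mul_le_mul_left _ (by omega)
    · have hr'm : r' < m := by omega
      have hr'r : r' < r := by omega
      have hdvd' : m ∣ a + t * m := ⟨k + t, by rw [hk]; ring⟩
      obtain ⟨Q, hQ, hQc⟩ := ih r' hr'r s' (a + t * m) hr0 (le_of_lt hr'm) hdvd'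
      have hlog : Nat.log B r' < s' := Nat.log_lt_of_lt_pow (by omega) hr'm
      have hg := glueDecomp hPm hQ (by omega) (by omega)
      refine ⟨Pm ∪ Q, ?_, ?_⟩
      · have : a + t * m + r' = a + r := by omega
        rwa [this] at hg
      · calc (Pm ∪ Q).card ≤ Pm.card + Q.card := Finset.card_union_le _ _
          _ ≤ (B - 1) + (B - 1) * s' := by
              have h2 : (B - 1) * (1 + Nat.log B r') ≤ (B - 1) * s' :=
                Nat.mul_le_mul_left _ (by omega)
              omega
          _ = (B - 1) * (1 + s') := by ring

lemma suffixDecomp (B : ℕ) (hB : 2 ≤ B) :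
    ∀ r : ℕ, ∀ s e : ℕ, 0 < r → r ≤ B ^ s → r ≤ e → B ^ s ∣ e →
    ∃ P : Finset (ℕ × ℕ), IsDecomp B P (Finset.Ico (e - r) e) ∧
      P.card ≤ (B - 1) * (1 + Nat.log B r) := by
  intro r
  induction r using Nat.strong_induction_on with
  | _ r ih =>
    intro s e hr hrs hre hdvd
    set s' := Nat.log B r with hs'
    set m := B ^ s' with hm
    have hm0 : 0 < m := pow_pos (by omega) _
    have hmr : m ≤ r := Nat.pow_log_le_self B (by omega)
    have hrB : r < B * m := by
      have := Nat.lt_pow_succ_log_self (by omega : 1 < B) r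
      calc r < B ^ (Nat.log B r + 1) := this
        _ = B * m := by rw [hm, hs', pow_succ, mul_comm]
    have hss : s' ≤ s :=
      (Nat.pow_le_pow_iff_right (by omega : 1 < B)).1 (le_trans hmr hrs)
    have hmdvd : m ∣ e := dvd_trans (pow_dvd_pow B hss) hdvd
    obtain ⟨ke, hke⟩ := hmdvd
    have hkem : ke * m = e := by rw [hke, mul_comm]
    set t := r / m with ht
    have htm : t * m ≤ r := Nat.div_mul_le_self r m
    have htm2 : r < t * m + m := by
      have h1 := Nat.mod_add_div r m
      have h2 := Nat.mod_lt r hm0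
      have h3 : m * (r / m) = t * m := by rw [ht, mul_comm]
      omega
    have ht1 : 1 ≤ t := (Nat.one_le_div_iff hm0).2 hmr
    have htB : t ≤ B - 1 := by
      have htb : t < B := by
        by_contra hcon
        push_neg at hcon
        have : B * m ≤ t * m := Nat.mul_le_mul_right _ hcon
        omega
      omega
    have hte : t * m ≤ ke * m := by omega
    have htke : t ≤ ke := Nat.le_of_mul_le_mul_right hte hm0
    obtain ⟨Pm, hPm, hPmc⟩ := blocksDecomp B hB s' (ke - t) t
    have he1 : (ke - t) * m = e - t * m := by rw [Nat.sub_mul]; omega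
    have he2 : (ke - t + t) * m = e := by rw [Nat.sub_add_cancel htke]; omega
    rw [he1, he2] at hPm
    set r' := r - t * m with hr'
    rcases Nat.eq_zero_or_pos r' with hr0 | hr0
    · refine ⟨Pm, ?_, ?_⟩
      · have : e - t * m = e - r := by omega
        rwa [this] at hPm
      · calc Pm.card ≤ t := hPmc
          _ ≤ (B - 1) * 1 := by omega
          _ ≤ (B - 1) * (1 + Nat.log B r) := Nat.mul_le_mul_left _ (by omega)
    · have hr'm : r' < m := by omega
      have hr'r : r' < r := by omega
      have hdvd' : m ∣ e - t * m := Nat.dvd_sub ⟨ke, hke⟩ (dvd_mul_left m t)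
      obtain ⟨Q, hQ, hQc⟩ := ih r' hr'r s' (e - t * m) hr0 (le_of_lt hr'm)
        (by omega) hdvd'
      have hQ' : IsDecomp B Q (Finset.Ico (e - r) (e - t * m)) := by
        have : e - t * m - r' = e - r := by omega
        rwa [this] at hQ
      have hlog : Nat.log B r' < s' := Nat.log_lt_of_lt_pow (by omega) hr'm
      have hg := glueDecomp hQ' hPm (by omega) (by omega)
      refine ⟨Q ∪ Pm, hg, ?_⟩
      calc (Q ∪ Pm).card ≤ Q.card + Pm.card := Finset.card_union_le _ _
        _ ≤ (B - 1) * s' + (B - 1) := by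
            have h2 : (B - 1) * (1 + Nat.log B r') ≤ (B - 1) * s' :=
              Nat.mul_le_mul_left _ (by omega)
            omega
        _ = (B - 1) * (1 + s') := by ring

/-- Let `B ≥ 2` and `h ≥ 1` be integers and set `D = B^h`. Every interval
`[a,b] ⊆ {0,…,D−1}` of length `r = b − a + 1` can be partitioned into at most
`2(B−1)(1 + ⌊log_B r⌋)` pairwise disjoint B-adic intervals. -/
theorem badic_decomposition (B h : ℕ) (hB : 2 ≤ B) (hh : 1 ≤ h)
    (a b : ℕ) (hab : a ≤ b) (hbD : b < B ^ h) :
    ∃ P : Finset (ℕ × ℕ),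
      (∀ p ∈ P, ∃ j k : ℕ, p.1 = k * B ^ j ∧ p.2 = (k + 1) * B ^ j - 1) ∧
      ((P : Set (ℕ × ℕ)).Pairwise fun p q =>
        Disjoint (Finset.Icc p.1 p.2) (Finset.Icc q.1 q.2)) ∧
      P.biUnion (fun p => Finset.Icc p.1 p.2) = Finset.Icc a b ∧
      P.card ≤ 2 * (B - 1) * (1 + Nat.log B (b - a + 1)) := by
  set r := b + 1 - a with hrdef
  have hr : 0 < r := by omega
  have har : a + r = b + 1 := by omega
  set j := Nat.log B r with hj
  set m := B ^ j with hm
  have hm0 : 0 < m := pow_pos (by omega) _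
  have hmr : m ≤ r := Nat.pow_log_le_self B (by omega)
  have hrB : r < B * m := by
    have := Nat.lt_pow_succ_log_self (by omega : 1 < B) r
    calc r < B ^ (Nat.log B r + 1) := this
      _ = B * m := by rw [hm, hj, pow_succ, mul_comm]
  -- right-aligned endpoint e'
  set q := (b + 1) / m with hq
  set rq := (b + 1) % m with hrq
  have hq1 : rq + m * q = b + 1 := Nat.mod_add_div (b + 1) m
  have hrqm : rq < m := Nat.mod_lt _ hm0
  set e' := m * q with he'
  have hae : a ≤ e' := by omega
  -- left-aligned point a'
  set d := e' - a with hd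
  set qd := d / m with hqd
  set rl := d % m with hrl
  have hd1 : rl + m * qd = d := Nat.mod_add_div d m
  have hrlm : rl < m := Nat.mod_lt _ hm0
  set a' := a + rl with ha'
  have ha'e : a' ≤ e' := by omega
  have hdvda' : m ∣ a' := by
    have h1 : a' = m * q - m * qd := by omega
    rw [h1]
    exact Nat.dvd_sub (dvd_mul_right m q) (dvd_mul_right m qd)
  -- left part
  obtain ⟨PL, hPL, hPLc⟩ :
      ∃ PL, IsDecomp B PL (Finset.Ico a a') ∧ PL.card ≤ (B - 1) * j := by
    rcases Nat.eq_zero_or_pos rl with h0 | h0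
    · refine ⟨∅, ?_, by simp⟩
      have : a' = a := by omega
      rw [this]; exact emptyDecomp B a
    · obtain ⟨PL, hPL, hPLc⟩ := suffixDecomp B hB rl j a' h0
        (le_of_lt hrlm) (by omega) hdvda'
      have hlog : Nat.log B rl < j := Nat.log_lt_of_lt_pow (by omega) hrlm
      refine ⟨PL, ?_, ?_⟩
      · have : a' - rl = a := by omega
        rwa [this] at hPL
      · calc PL.card ≤ (B - 1) * (1 + Nat.log B rl) := hPLc
          _ ≤ (B - 1) * j := Nat.mul_le_mul_left _ (by omega)
  -- middle part
  obtain ⟨k, hk⟩ := hdvda'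
  obtain ⟨PM, hPM, hPMc⟩ := blocksDecomp B hB j k qd
  have hk1 : k * m = a' := by rw [hk, mul_comm]
  have hk2 : (k + qd) * m = e' := by
    have h3 : qd * m = m * qd := mul_comm _ _
    rw [add_mul, hk1]; omega
  rw [hk1, hk2] at hPM
  have hqdB : qd ≤ B - 1 := by
    have hcom : B * m = m * B := mul_comm _ _
    have h4 : m * qd < m * B := by omega
    have := Nat.lt_of_mul_lt_mul_left h4
    omega
  -- right part
  obtain ⟨PR, hPR, hPRc⟩ :
      ∃ PR, IsDecomp B PR (Finset.Ico e' (b + 1)) ∧ PR.card ≤ (B - 1) * j := by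
    rcases Nat.eq_zero_or_pos rq with h0 | h0
    · refine ⟨∅, ?_, by simp⟩
      have : b + 1 = e' := by omega
      rw [this]; exact emptyDecomp B e'
    · obtain ⟨PR, hPR, hPRc⟩ := prefixDecomp B hB rq j e' h0
        (le_of_lt hrqm) (dvd_mul_right m q)
      have hlog : Nat.log B rq < j := Nat.log_lt_of_lt_pow (by omega) hrqm
      refine ⟨PR, ?_, ?_⟩
      · have : e' + rq = b + 1 := by omega
        rwa [this] at hPR
      · calc PR.card ≤ (B - 1) * (1 + Nat.log B rq) := hPRc
          _ ≤ (B - 1) * j := Nat.mul_le_mul_left _ (by omega)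
  -- glue
  have hg1 := glueDecomp hPL hPM (by omega) ha'e
  have hg2 := glueDecomp hg1 hPR hae (by omega)
  obtain ⟨h1, h2, h3⟩ := hg2
  refine ⟨PL ∪ PM ∪ PR, h1, h2, ?_, ?_⟩
  · rw [← Finset.Ico_add_one_right_eq_Icc]; exact h3
  · have hba : b - a + 1 = r := by omega
    rw [hba, ← hj]
    have hc1 : (PL ∪ PM ∪ PR).card ≤ PL.card + PM.card + PR.card := by
      calc (PL ∪ PM ∪ PR).card ≤ (PL ∪ PM).card + PR.card := Finset.card_union_le _ _
        _ ≤ PL.card + PM.card + PR.card := by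
            have := Finset.card_union_le PL PM; omega
    have hring : 2 * (B - 1) * (1 + j) = (B - 1) * j + (B - 1) + ((B - 1) * j + (B - 1)) := by
      ring
    omega
end

section
/- For every integer D ≥ 2, Σ_{r=2}^{D} (D − r + 1)·ln(r) ≤ D(D−1)·ln(3D²/(2D+1)). Consequently, for any integer B ≥ 2 and real V_F ≥ 0, the average over all range-query lengths r (weighted by the D − r + 1 queries of length r, and normalized by D(D−1)/2) of the per-query variance bound 2(B−1)·V_F·log_B(D)·log_B(r) is at most 2(B−1)·V_F·log_B(D)·log_B(3D²/(1+2D)). -/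
lemma gauss_sum_real (D : ℕ) :
    ∑ r ∈ Finset.Icc 2 D, ((D : ℝ) - r + 1) = (D : ℝ) * ((D : ℝ) - 1) / 2 := by
  induction D with
  | zero => simp
  | succ n ih =>
    rcases Nat.eq_zero_or_pos n with h | h
    · subst h; simp
    · rw [Finset.sum_Icc_succ_top (by omega)]
      have hcast : ∀ r : ℕ, ((n+1 : ℕ) : ℝ) - r + 1 = ((n : ℝ) - r + 1) + 1 := by
        intro r; push_cast; ring
      have hsum : ∑ r ∈ Finset.Icc 2 n, (((n+1 : ℕ) : ℝ) - r + 1)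
          = (∑ r ∈ Finset.Icc 2 n, ((n : ℝ) - r + 1)) + ((Finset.Icc 2 n).card : ℝ) := by
        simp_rw [hcast, Finset.sum_add_distrib, Finset.sum_const, nsmul_eq_mul, mul_one]
      rw [hsum, ih, Nat.card_Icc]
      have : ((n + 1 - 2 : ℕ) : ℝ) = (n : ℝ) - 1 := by
        have : (n + 1 - 2 : ℕ) = n - 1 := by omega
        rw [this]; push_cast [h]; ring
      rw [this]; push_cast; ring

lemma core_bound (D : ℕ) (hD : 2 ≤ D) :
    ∑ r ∈ Finset.Icc 2 D, ((D : ℝ) - r + 1) * Real.log r ≤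
      ((D : ℝ) * ((D : ℝ) - 1) / 2) * Real.log (3 * (D : ℝ) ^ 2 / (2 * D + 1)) := by
  have hD2 : (2 : ℝ) ≤ (D : ℝ) := by exact_mod_cast hD
  have hQ : (D : ℝ) ≤ 3 * (D : ℝ) ^ 2 / (2 * D + 1) := by
    rw [le_div_iff₀ (by positivity)]; nlinarith
  have hstep : ∑ r ∈ Finset.Icc 2 D, ((D : ℝ) - r + 1) * Real.log r ≤
      ∑ r ∈ Finset.Icc 2 D, ((D : ℝ) - r + 1) * Real.log (3 * (D : ℝ) ^ 2 / (2 * D + 1)) := by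
    apply Finset.sum_le_sum
    intro r hr
    rw [Finset.mem_Icc] at hr
    have hr1 : (1 : ℝ) ≤ (r : ℝ) := by exact_mod_cast Nat.one_le_of_lt hr.1
    have hrD : (r : ℝ) ≤ (D : ℝ) := by exact_mod_cast hr.2
    have hw : (0 : ℝ) ≤ (D : ℝ) - r + 1 := by linarith
    exact mul_le_mul_of_nonneg_left (Real.log_le_log (by linarith) (le_trans hrD hQ)) hw
  calc _ ≤ _ := hstep
    _ = ((D : ℝ) * ((D : ℝ) - 1) / 2) * Real.log (3 * (D : ℝ) ^ 2 / (2 * D + 1)) := by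
        rw [← Finset.sum_mul, gauss_sum_real]


/-- For every integer `D ≥ 2`, `∑_{r=2}^D (D−r+1)·ln r ≤ D(D−1)·ln(3D²/(2D+1))`.
Consequently, for `B ≥ 2` and `V_F ≥ 0`, the weighted average (over the `D−r+1`
queries of each length `r`, normalized by `D(D−1)/2`) of the per-query variance
bound `2(B−1)·V_F·log_B(D)·log_B(r)` is at most
`2(B−1)·V_F·log_B(D)·log_B(3D²/(1+2D))`. -/
theorem hh_average_error_bound (D : ℕ) (hD : 2 ≤ D) :
    (∑ r ∈ Finset.Icc 2 D, ((D : ℝ) - r + 1) * Real.log r ≤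
      (D : ℝ) * ((D : ℝ) - 1) * Real.log (3 * (D : ℝ) ^ 2 / (2 * D + 1))) ∧
    ∀ B : ℕ, 2 ≤ B → ∀ VF : ℝ, 0 ≤ VF →
      (∑ r ∈ Finset.Icc 1 D, ((D : ℝ) - r + 1) *
          (2 * ((B : ℝ) - 1) * VF * Real.logb B D * Real.logb B r)) /
        ((D : ℝ) * ((D : ℝ) - 1) / 2) ≤
      2 * ((B : ℝ) - 1) * VF * Real.logb B D *
        Real.logb B (3 * (D : ℝ) ^ 2 / (1 + 2 * D)) := by
  have hD2 : (2 : ℝ) ≤ (D : ℝ) := by exact_mod_cast hD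
  have hS : (0 : ℝ) < (D : ℝ) * ((D : ℝ) - 1) / 2 := by nlinarith
  have hQ : (D : ℝ) ≤ 3 * (D : ℝ) ^ 2 / (2 * D + 1) := by
    rw [le_div_iff₀ (by positivity)]; nlinarith
  have hL : (0 : ℝ) ≤ Real.log (3 * (D : ℝ) ^ 2 / (2 * D + 1)) :=
    Real.log_nonneg (by linarith)
  have hcore := core_bound D hD
  constructor
  · calc _ ≤ _ := hcore
      _ ≤ (D : ℝ) * ((D : ℝ) - 1) * Real.log (3 * (D : ℝ) ^ 2 / (2 * D + 1)) := by
          apply mul_le_mul_of_nonneg_right _ hL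
          nlinarith
  · intro B hB VF hVF
    have hB2 : (2 : ℝ) ≤ (B : ℝ) := by exact_mod_cast hB
    have hlogB : (0 : ℝ) < Real.log B := Real.log_pos (by linarith)
    set A : ℝ := 2 * ((B : ℝ) - 1) * VF * Real.logb B D with hA
    have hA0 : 0 ≤ A := by
      apply mul_nonneg (mul_nonneg (by linarith) hVF)
      exact Real.logb_nonneg (by linarith) (by linarith)
    -- drop the r = 1 term
    have hsum1 : ∑ r ∈ Finset.Icc 1 D, ((D : ℝ) - r + 1) * (A * Real.logb B r)
        = ∑ r ∈ Finset.Icc 2 D, ((D : ℝ) - r + 1) * (A * Real.logb B r) := by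
      symm
      apply Finset.sum_subset (Finset.Icc_subset_Icc_left (by norm_num))
      intro x hx hx2
      rw [Finset.mem_Icc] at hx hx2
      have : x = 1 := by omega
      simp [this]
    have hfact : ∑ r ∈ Finset.Icc 2 D, ((D : ℝ) - r + 1) * (A * Real.logb B r)
        = (A / Real.log B) * ∑ r ∈ Finset.Icc 2 D, ((D : ℝ) - r + 1) * Real.log r := by
      rw [Finset.mul_sum]
      apply Finset.sum_congr rfl
      intro r hr
      rw [Real.logb]; ring
    have h12 : (1 : ℝ) + 2 * D = 2 * D + 1 := by ring
    rw [hsum1, hfact, div_le_iff₀ hS, h12, Real.logb]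
    have : 2 * ((B : ℝ) - 1) * VF * Real.logb (B : ℝ) (D : ℝ) *
        (Real.log (3 * (D : ℝ) ^ 2 / (2 * (D : ℝ) + 1)) / Real.log (B : ℝ)) *
        ((D : ℝ) * ((D : ℝ) - 1) / 2)
        = (A / Real.log B) * (((D : ℝ) * ((D : ℝ) - 1) / 2) *
            Real.log (3 * (D : ℝ) ^ 2 / (2 * (D : ℝ) + 1))) := by
      rw [hA]; ring
    rw [this]
    exact mul_le_mul_of_nonneg_left hcore (by positivity)
end

section
/- Let ε > 0, and let N ≥ 1 and 0 ≤ n₁ ≤ N be integers. With X = Bino(n₁, 1/2) + Bino(N − n₁, 1/(1+e^ε)) (independent binomials) and the estimator Ẑ = (X/N − 1/(e^ε + 1)) / (1/2 − 1/(e^ε + 1)), the variance of Ẑ equals (n₁/4 + (N − n₁)·e^ε/(1 + e^ε)²) · 4(e^ε + 1)² / (N²·(e^ε − 1)²). In particular, when n₁ = 0 the variance equals 4e^ε/(N·(e^ε − 1)²). -/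
/-!
The estimator is an affine function of `X = ∑ i, X i`, so its variance is
`Var X / (N (1/2 - 1/(e^ε+1)))²`. By independence `Var X` is the sum of the Bernoulli variances
`p (1 - p)`, namely `n₁ / 4 + (N - n₁) e^ε / (1 + e^ε)²`.
-/

open MeasureTheory ProbabilityTheory

theorem Fin.sum_ite_val_lt {M : Type*} [AddCommMonoid M] {N n : ℕ} (hn : n ≤ N) (a b : M) :
    ∑ i : Fin N, (if (i : ℕ) < n then a else b) = n • a + (N - n) • b := by
  rw [Fin.sum_univ_eq_sum_range (fun i ↦ if i < n then a else b),
    ← Finset.sum_range_add_sum_Ico _ hn,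
    Finset.sum_congr rfl fun i hi ↦ if_pos (Finset.mem_range.mp hi),
    Finset.sum_congr rfl fun i hi ↦ if_neg (Finset.mem_Ico.mp hi).1.not_gt]
  simp

section Variance

variable {Ω : Type*} [MeasurableSpace Ω] {μ : Measure Ω} [IsProbabilityMeasure μ]

lemma variance_div_sub_div {X : Ω → ℝ} (hX : AEStronglyMeasurable X μ) (a b c : ℝ) :
    Var[fun ω ↦ (X ω / a - b) / c; μ] = Var[X; μ] / (a * c) ^ 2 := by
  simp_rw [div_eq_mul_inv]
  rw [variance_mul_const, variance_sub_const (hX.mul_const _), variance_mul_const]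
  ring

lemma variance_of_eq_zero_or_one {X : Ω → ℝ} (hX : Measurable X)
    (h01 : ∀ ω, X ω = 0 ∨ X ω = 1) {p : ℝ} (hp : 0 ≤ p)
    (hXp : μ {ω | X ω = 1} = ENNReal.ofReal p) :
    Var[X; μ] = p * (1 - p) := by
  have hzero : {ω | X ω = 0} = {ω | X ω = 1}ᶜ := by
    ext ω
    rcases h01 ω with h | h <;> simp [h]
  rw [variance_of_ae_eq_zero_or_one hX.aemeasurable (ae_of_all _ h01), hzero,
    probReal_compl_eq_one_sub (s := {ω | X ω = 1}) (hX (measurableSet_singleton 1)), measureReal_def, hXp,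
    ENNReal.toReal_ofReal hp]
  ring

lemma variance_sum_of_iIndepFun_of_eq_zero_or_one {N n : ℕ} (hn : n ≤ N)
    {X : Fin N → Ω → ℝ} (hX : ∀ i, Measurable (X i)) (h01 : ∀ i ω, X i ω = 0 ∨ X i ω = 1)
    (hindep : iIndepFun X μ) {p q : ℝ} (hp : 0 ≤ p) (hq : 0 ≤ q)
    (hXp : ∀ i : Fin N, (i : ℕ) < n → μ {ω | X i ω = 1} = ENNReal.ofReal p)
    (hXq : ∀ i : Fin N, n ≤ (i : ℕ) → μ {ω | X i ω = 1} = ENNReal.ofReal q) :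
    Var[fun ω ↦ ∑ i, X i ω; μ] = n * (p * (1 - p)) + (N - n) * (q * (1 - q)) := by
  have hvar (i : Fin N) : Var[X i; μ] = if (i : ℕ) < n then p * (1 - p) else q * (1 - q) := by
    split_ifs with h
    · exact variance_of_eq_zero_or_one (hX i) (h01 i) hp (hXp i h)
    · exact variance_of_eq_zero_or_one (hX i) (h01 i) hq (hXq i (not_lt.mp h))
  have hmemLp (i : Fin N) : MemLp (X i) 2 μ :=
    .of_bound (hX i).aestronglyMeasurable 1 <| ae_of_all _ fun ω ↦ by
      rcases h01 i ω with h | h <;> simp [h]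
  rw [← Finset.sum_fn, IndepFun.variance_sum (fun i _ ↦ hmemLp i)
      fun i _ j _ hij ↦ hindep.indepFun hij, Finset.sum_congr rfl fun i _ ↦ hvar i,
    Fin.sum_ite_val_lt hn, nsmul_eq_mul, nsmul_eq_mul, Nat.cast_sub hn]

end Variance

theorem oue_variance_general {Ω : Type*} [MeasureSpace Ω]
    [IsProbabilityMeasure (ℙ : Measure Ω)]
    (ε : ℝ) (N n₁ : ℕ) (hN : 1 ≤ N) (hn : n₁ ≤ N)
    (X : Fin N → Ω → ℝ) (hmeas : ∀ i, Measurable (X i))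
    (h01 : ∀ i ω, X i ω = 0 ∨ X i ω = 1)
    (hindep : iIndepFun X ℙ)
    (hp1 : ∀ i : Fin N, (i : ℕ) < n₁ → ℙ {ω | X i ω = 1} = ENNReal.ofReal (1 / 2))
    (hp2 : ∀ i : Fin N, n₁ ≤ (i : ℕ) →
      ℙ {ω | X i ω = 1} = ENNReal.ofReal (1 / (1 + Real.exp ε))) :
    variance (fun ω => ((∑ i, X i ω) / N - 1 / (Real.exp ε + 1)) /
        (1 / 2 - 1 / (Real.exp ε + 1))) ℙ =
      ((n₁ : ℝ) / 4 + ((N : ℝ) - n₁) * Real.exp ε / (1 + Real.exp ε) ^ 2) *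
        (4 * (Real.exp ε + 1) ^ 2) / ((N : ℝ) ^ 2 * (Real.exp ε - 1) ^ 2) ∧
    (n₁ = 0 →
      variance (fun ω => ((∑ i, X i ω) / N - 1 / (Real.exp ε + 1)) /
          (1 / 2 - 1 / (Real.exp ε + 1))) ℙ =
        4 * Real.exp ε / ((N : ℝ) * (Real.exp ε - 1) ^ 2)) := by
  set e := Real.exp ε
  have he : 0 < e := Real.exp_pos ε
  have hsum := variance_sum_of_iIndepFun_of_eq_zero_or_one hn hmeas h01 hindep
    (by norm_num) (by positivity) hp1 hp2
  have hvar_half : (1 / 2 : ℝ) * (1 - 1 / 2) = 1 / 4 := by norm_num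
  have hvar_q : 1 / (1 + e) * (1 - 1 / (1 + e)) = e / (1 + e) ^ 2 := by
    field_simp
    ring
  have hscale :
      ((N : ℝ) * (1 / 2 - 1 / (e + 1))) ^ 2 = N ^ 2 * (e - 1) ^ 2 / (4 * (e + 1) ^ 2) := by
    field_simp
    ring
  rw [variance_div_sub_div (X := fun ω ↦ ∑ i, X i ω) (by fun_prop), hscale, div_div_eq_mul_div,
    hsum, hvar_half, hvar_q]
  refine ⟨by ring, fun h0 ↦ ?_⟩
  subst h0
  have hN0 : (N : ℝ) ≠ 0 := by positivity
  field_simp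
  ring

/-- Variance of the Optimized Unary Encoding estimator: with `X` the sum of `N`
independent 0/1 reports (`n₁` true ones reported with probability `1/2`, the other
`N − n₁` with probability `1/(1+e^ε)`), the estimator
`Ẑ = (X/N − 1/(e^ε+1))/(1/2 − 1/(e^ε+1))` has variance
`(n₁/4 + (N−n₁)·e^ε/(1+e^ε)²)·4(e^ε+1)²/(N²(e^ε−1)²)`; in particular for `n₁ = 0`
it equals `4e^ε/(N(e^ε−1)²)`. -/
theorem oue_variance {Ω : Type*} [MeasureSpace Ω]
    [IsProbabilityMeasure (ℙ : Measure Ω)]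
    (ε : ℝ) (hε : 0 < ε) (N n₁ : ℕ) (hN : 1 ≤ N) (hn : n₁ ≤ N)
    (X : Fin N → Ω → ℝ) (hmeas : ∀ i, Measurable (X i))
    (h01 : ∀ i ω, X i ω = 0 ∨ X i ω = 1)
    (hindep : iIndepFun X ℙ)
    (hp1 : ∀ i : Fin N, (i : ℕ) < n₁ → ℙ {ω | X i ω = 1} = ENNReal.ofReal (1 / 2))
    (hp2 : ∀ i : Fin N, n₁ ≤ (i : ℕ) →
      ℙ {ω | X i ω = 1} = ENNReal.ofReal (1 / (1 + Real.exp ε))) :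
    variance (fun ω => ((∑ i, X i ω) / N - 1 / (Real.exp ε + 1)) /
        (1 / 2 - 1 / (Real.exp ε + 1))) ℙ =
      ((n₁ : ℝ) / 4 + ((N : ℝ) - n₁) * Real.exp ε / (1 + Real.exp ε) ^ 2) *
        (4 * (Real.exp ε + 1) ^ 2) / ((N : ℝ) ^ 2 * (Real.exp ε - 1) ^ 2) ∧
    (n₁ = 0 →
      variance (fun ω => ((∑ i, X i ω) / N - 1 / (Real.exp ε + 1)) /
          (1 / 2 - 1 / (Real.exp ε + 1))) ℙ =
        4 * Real.exp ε / ((N : ℝ) * (Real.exp ε - 1) ^ 2)) :=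
  oue_variance_general ε N n₁ hN hn X hmeas h01 hindep hp1 hp2
end
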